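/- arXiv:1704.08616 — 3 statements merged into one kernel-verified Lean document; each statement's English description precedes it below -/
import Mathlib

section
/- The Schlesinger Hamiltonians H_i = Σ_{j≠i} Tr(R_i R_j)/(t_i - t_j), viewed as functions on gl(n,ℂ)^m with the Lie–Poisson bracket and with pairwise distinct parameters t_1,...,t_m, pairwise Poisson-commute: {H_i, H_j} = 0 for all i, j. -/
set_option linter.unusedSectionVars false

namespace SchlesingerAux

variable {m n : ℕ} {A : Type*} [CommRing A] [Algebra ℂ A]

theorem P0l (P : A → A → A) (hadd : ∀ a b c : A, P (a + b) c = P a c + P b c)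
    (c : A) : P 0 c = 0 := by
  have h := hadd 0 0 c
  rw [zero_add] at h
  exact (add_eq_right.mp h.symm)

theorem Pself (P : A → A → A) (hanti : ∀ a b : A, P a b = -P b a) (a : A) : P a a = 0 := by
  have h : P a a = -P a a := hanti a a
  have h2 : (2:ℂ) • P a a = 0 := by
    rw [two_smul]; nth_rewrite 1 [h]; ring
  have := congrArg (fun y => ((2:ℂ))⁻¹ • y) h2
  simpa [smul_smul] using this

theorem Psmulr (P : A → A → A) (hsmul : ∀ (r : ℂ) (a b : A), P (r • a) b = r • P a b)
    (hanti : ∀ a b : A, P a b = -P b a) (r : ℂ) (a b : A) : P a (r • b) = r • P a b := by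
  rw [hanti a (r • b), hsmul, ← smul_neg, ← hanti a b]

theorem Psuml (P : A → A → A) (hadd : ∀ a b c : A, P (a + b) c = P a c + P b c)
    {ι : Type*} (s : Finset ι) (f : ι → A) (c : A) :
    P (∑ i ∈ s, f i) c = ∑ i ∈ s, P (f i) c := by
  classical
  induction s using Finset.cons_induction with
  | empty => simpa using P0l P hadd c
  | cons a s ha ih => rw [Finset.sum_cons, hadd, ih, Finset.sum_cons]

theorem Psumr (P : A → A → A) (hadd : ∀ a b c : A, P (a + b) c = P a c + P b c)
    (hanti : ∀ a b : A, P a b = -P b a) {ι : Type*} (s : Finset ι) (f : ι → A) (c : A) :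
    P c (∑ i ∈ s, f i) = ∑ i ∈ s, P c (f i) := by
  rw [hanti, Psuml P hadd, ← Finset.sum_neg_distrib]
  exact Finset.sum_congr rfl fun i _ => (hanti c (f i)).symm

theorem Pleibl (P : A → A → A) (hanti : ∀ a b : A, P a b = -P b a)
    (hleib : ∀ a b c : A, P a (b * c) = P a b * c + b * P a c) (a b c : A) :
    P (a * b) c = P a c * b + a * P b c := by
  calc P (a*b) c = -(P c a * b + a * P c b) := by rw [hanti, hleib]
  _ = (-P c a) * b + a * (-P c b) := by ring
  _ = P a c * b + a * P b c := by rw [← hanti a c, ← hanti b c]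

/-- `Tr(R_a R_b)` -/
def T (x : Fin m → Fin n → Fin n → A) (a b : Fin m) : A :=
  ∑ k, ∑ l, x a k l * x b l k

/-- `Tr(R_u R_v R_w)` -/
def Tr3 (x : Fin m → Fin n → Fin n → A) (u v w : Fin m) : A :=
  ∑ k, ∑ l, ∑ p, x u k l * x v l p * x w p k

theorem sum3_rot (f : Fin n → Fin n → Fin n → A) :
    ∑ k, ∑ l, ∑ p, f k l p = ∑ k, ∑ l, ∑ p, f p k l :=
  calc ∑ k, ∑ l, ∑ p, f k l p
      = ∑ l, ∑ k, ∑ p, f k l p := Finset.sum_comm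
    _ = ∑ l, ∑ p, ∑ k, f k l p := Finset.sum_congr rfl fun _ _ => Finset.sum_comm

theorem Tr3_cyc (x : Fin m → Fin n → Fin n → A) (u v w : Fin m) :
    Tr3 x u v w = Tr3 x w u v := by
  unfold Tr3
  conv_lhs => rw [sum3_rot]
  conv_lhs => rw [sum3_rot]
  exact Finset.sum_congr rfl fun k _ => Finset.sum_congr rfl fun l _ =>
    Finset.sum_congr rfl fun p _ => by ring

theorem key (P : A → A → A) (x : Fin m → Fin n → Fin n → A)
    (hbr : ∀ (i i' : Fin m) (k l k' l' : Fin n),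
      P (x i k l) (x i' k' l') =
        if i = i' then
          (if l = k' then x i k l' else 0) - (if l' = k then x i k' l else 0)
        else 0)
    (a c : Fin m) (g h : Fin n → Fin n → A) :
    ∑ k, ∑ l, ∑ k', ∑ l', g l k * h l' k' * P (x a k l) (x c k' l')
      = if a = c then
          (∑ k, ∑ l, ∑ p, x a k l * h l p * g p k)
          - (∑ k, ∑ l, ∑ p, x a k l * g l p * h p k)
        else 0 := by
  by_cases hac : a = c
  · subst hac
    simp only [hbr, eq_self_iff_true, if_true, mul_sub, Finset.sum_sub_distrib,
      mul_ite, mul_zero, Finset.sum_ite_irrel, Finset.sum_ite_eq, Finset.sum_ite_eq',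
      Finset.mem_univ, if_true, Finset.sum_const_zero]
    congr 1
    · refine Finset.sum_congr rfl fun k _ => ?_
      rw [Finset.sum_comm]
      exact Finset.sum_congr rfl fun l _ => Finset.sum_congr rfl fun p _ => by ring
    · calc ∑ k, ∑ l, ∑ k', g l k * h k k' * x a k' l
          = ∑ l, ∑ k, ∑ k', g l k * h k k' * x a k' l := Finset.sum_comm
        _ = ∑ l, ∑ k', ∑ k, g l k * h k k' * x a k' l :=
            Finset.sum_congr rfl fun _ _ => Finset.sum_comm
        _ = ∑ k', ∑ l, ∑ k, g l k * h k k' * x a k' l := Finset.sum_comm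
        _ = ∑ k, ∑ l, ∑ p, x a k l * g l p * h p k :=
            Finset.sum_congr rfl fun k _ => Finset.sum_congr rfl fun l _ =>
              Finset.sum_congr rfl fun p _ => by ring
  · simp [hbr, hac]

theorem brTT (P : A → A → A)
    (hadd : ∀ a b c : A, P (a + b) c = P a c + P b c)
    (hanti : ∀ a b : A, P a b = -P b a)
    (hleib : ∀ a b c : A, P a (b * c) = P a b * c + b * P a c)
    (x : Fin m → Fin n → Fin n → A)
    (hbr : ∀ (i i' : Fin m) (k l k' l' : Fin n),
      P (x i k l) (x i' k' l') =
        if i = i' then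
          (if l = k' then x i k l' else 0) - (if l' = k then x i k' l else 0)
        else 0)
    (a b c d : Fin m) :
    P (T x a b) (T x c d)
      = (if a = c then Tr3 x a d b - Tr3 x a b d else 0)
      + (if a = d then Tr3 x a c b - Tr3 x a b c else 0)
      + (if b = c then Tr3 x b d a - Tr3 x b a d else 0)
      + (if b = d then Tr3 x b c a - Tr3 x b a c else 0) := by
  have expand : P (T x a b) (T x c d)
      = (∑ k, ∑ l, ∑ k', ∑ l', x b l k * x d l' k' * P (x a k l) (x c k' l'))
      + (∑ k, ∑ l, ∑ k', ∑ l', x b l k * x c k' l' * P (x a k l) (x d l' k'))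
      + (∑ k, ∑ l, ∑ k', ∑ l', x a k l * x d l' k' * P (x b l k) (x c k' l'))
      + (∑ k, ∑ l, ∑ k', ∑ l', x a k l * x c k' l' * P (x b l k) (x d l' k')) := by
    unfold T
    simp only [Psuml P hadd, Psumr P hadd hanti]
    simp only [Pleibl P hanti hleib, hleib]
    simp only [← Finset.sum_add_distrib]
    refine Finset.sum_congr rfl fun k _ => Finset.sum_congr rfl fun l _ =>
      Finset.sum_congr rfl fun k' _ => Finset.sum_congr rfl fun l' _ => by ring
  rw [expand]
  have e1 : (∑ k, ∑ l, ∑ k', ∑ l', x b l k * x d l' k' * P (x a k l) (x c k' l'))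
      = if a = c then Tr3 x a d b - Tr3 x a b d else 0 := by
    rw [key P x hbr a c (x b) (x d)]; rfl
  have e2 : (∑ k, ∑ l, ∑ k', ∑ l', x b l k * x c k' l' * P (x a k l) (x d l' k'))
      = if a = d then Tr3 x a c b - Tr3 x a b c else 0 := by
    have swap : (∑ k, ∑ l, ∑ k', ∑ l', x b l k * x c k' l' * P (x a k l) (x d l' k'))
        = ∑ k, ∑ l, ∑ k', ∑ l', x b l k * x c l' k' * P (x a k l) (x d k' l') :=
      Finset.sum_congr rfl fun k _ => Finset.sum_congr rfl fun l _ => Finset.sum_comm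
    rw [swap, key P x hbr a d (x b) (x c)]; rfl
  have e3 : (∑ k, ∑ l, ∑ k', ∑ l', x a k l * x d l' k' * P (x b l k) (x c k' l'))
      = if b = c then Tr3 x b d a - Tr3 x b a d else 0 := by
    have swap : (∑ k, ∑ l, ∑ k', ∑ l', x a k l * x d l' k' * P (x b l k) (x c k' l'))
        = ∑ k, ∑ l, ∑ k', ∑ l', x a l k * x d l' k' * P (x b k l) (x c k' l') :=
      Finset.sum_comm
    rw [swap, key P x hbr b c (x a) (x d)]; rfl
  have e4 : (∑ k, ∑ l, ∑ k', ∑ l', x a k l * x c k' l' * P (x b l k) (x d l' k'))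
      = if b = d then Tr3 x b c a - Tr3 x b a c else 0 := by
    have swap : (∑ k, ∑ l, ∑ k', ∑ l', x a k l * x c k' l' * P (x b l k) (x d l' k'))
        = ∑ k, ∑ l, ∑ k', ∑ l', x a l k * x c l' k' * P (x b k l) (x d k' l') :=
      calc (∑ k, ∑ l, ∑ k', ∑ l', x a k l * x c k' l' * P (x b l k) (x d l' k'))
          = ∑ k, ∑ l, ∑ k', ∑ l', x a l k * x c k' l' * P (x b k l) (x d l' k') :=
            Finset.sum_comm
        _ = ∑ k, ∑ l, ∑ k', ∑ l', x a l k * x c l' k' * P (x b k l) (x d k' l') :=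
            Finset.sum_congr rfl fun k _ => Finset.sum_congr rfl fun l _ => Finset.sum_comm
    rw [swap, key P x hbr b d (x a) (x c)]; rfl
  rw [e1, e2, e3, e4]

end SchlesingerAux

set_option maxHeartbeats 1000000 in
/-- The Schlesinger Hamiltonians Poisson-commute.

We model the polynomial Poisson algebra `Sym(gl(n,ℂ)^m)` with its Lie–Poisson
bracket abstractly: `A` is a commutative `ℂ`-algebra with a bracket `P` which is
antisymmetric, additive and `ℂ`-linear in the first slot, a derivation in the
second slot, and which contains coordinate functions `x i k l = (R_i)_{kl}`
satisfying the Lie–Poisson relations of `gl(n,ℂ)^m`. The Schlesinger Hamiltonians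
are `H_i = Σ_{j≠i} Tr(R_i R_j)/(t_i - t_j)` with `Tr(R_iR_j) = Σ_{k,l}(R_i)_{kl}(R_j)_{lk}`
and pairwise distinct `t_1, …, t_m`. Then `{H_i, H_j} = 0` for all `i, j`. -/
theorem schlesinger_hamiltonians_poisson_commute (m n : ℕ) (A : Type*) [CommRing A]
    [Algebra ℂ A]
    (P : A → A → A)
    (hadd : ∀ a b c : A, P (a + b) c = P a c + P b c)
    (hsmul : ∀ (r : ℂ) (a b : A), P (r • a) b = r • P a b)
    (hanti : ∀ a b : A, P a b = -P b a)
    (hleib : ∀ a b c : A, P a (b * c) = P a b * c + b * P a c)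
    (x : Fin m → Fin n → Fin n → A)
    (hbr : ∀ (i i' : Fin m) (k l k' l' : Fin n),
      P (x i k l) (x i' k' l') =
        if i = i' then
          (if l = k' then x i k l' else 0) - (if l' = k then x i k' l else 0)
        else 0)
    (t : Fin m → ℂ) (ht : Function.Injective t)
    (i j : Fin m) :
    P (∑ a ∈ Finset.univ.erase i, (t i - t a)⁻¹ • ∑ k, ∑ l, x i k l * x a l k)
      (∑ a ∈ Finset.univ.erase j, (t j - t a)⁻¹ • ∑ k, ∑ l, x j k l * x a l k) = 0 := by
  classical
  open SchlesingerAux in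
  by_cases hij : i = j
  · subst hij
    exact SchlesingerAux.Pself P hanti _
  · have hji : j ≠ i := Ne.symm hij
    have step1 : P (∑ a ∈ Finset.univ.erase i, (t i - t a)⁻¹ • ∑ k, ∑ l, x i k l * x a l k)
        (∑ a ∈ Finset.univ.erase j, (t j - t a)⁻¹ • ∑ k, ∑ l, x j k l * x a l k)
        = ∑ a ∈ Finset.univ.erase i, ∑ b ∈ Finset.univ.erase j,
            ((t i - t a)⁻¹ * (t j - t b)⁻¹) •
              P (SchlesingerAux.T x i a) (SchlesingerAux.T x j b) := by
      rw [SchlesingerAux.Psuml P hadd]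
      refine Finset.sum_congr rfl fun a _ => ?_
      rw [hsmul, SchlesingerAux.Psumr P hadd hanti, Finset.smul_sum]
      refine Finset.sum_congr rfl fun b _ => ?_
      rw [SchlesingerAux.Psmulr P hsmul hanti, smul_smul]
      rfl
    rw [step1]
    have step2 : (∑ a ∈ Finset.univ.erase i, ∑ b ∈ Finset.univ.erase j,
            ((t i - t a)⁻¹ * (t j - t b)⁻¹) •
              P (SchlesingerAux.T x i a) (SchlesingerAux.T x j b))
        = ∑ a ∈ Finset.univ.erase i, ∑ b ∈ Finset.univ.erase j,
            ((t i - t a)⁻¹ * (t j - t b)⁻¹) •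
              ((if i = b then SchlesingerAux.Tr3 x i j a - SchlesingerAux.Tr3 x i a j else 0)
              + (if a = j then SchlesingerAux.Tr3 x a b i - SchlesingerAux.Tr3 x a i b else 0)
              + (if a = b then SchlesingerAux.Tr3 x a j i - SchlesingerAux.Tr3 x a i j else 0)) := by
      refine Finset.sum_congr rfl fun a _ => Finset.sum_congr rfl fun b _ => ?_
      rw [SchlesingerAux.brTT P hadd hanti hleib x hbr i a j b, if_neg hij, zero_add]
    rw [step2]
    have step3 : ∀ a ∈ Finset.univ.erase i,
        (∑ b ∈ Finset.univ.erase j,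
            ((t i - t a)⁻¹ * (t j - t b)⁻¹) •
              ((if i = b then SchlesingerAux.Tr3 x i j a - SchlesingerAux.Tr3 x i a j else 0)
              + (if a = j then SchlesingerAux.Tr3 x a b i - SchlesingerAux.Tr3 x a i b else 0)
              + (if a = b then SchlesingerAux.Tr3 x a j i - SchlesingerAux.Tr3 x a i j else 0)))
        = ((t i - t a)⁻¹ * (t j - t i)⁻¹) •
              (SchlesingerAux.Tr3 x i j a - SchlesingerAux.Tr3 x i a j)
          + (if a = j then ∑ b ∈ Finset.univ.erase j, ((t i - t a)⁻¹ * (t j - t b)⁻¹) •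
              (SchlesingerAux.Tr3 x a b i - SchlesingerAux.Tr3 x a i b) else 0)
          + (if a ∈ Finset.univ.erase j then ((t i - t a)⁻¹ * (t j - t a)⁻¹) •
              (SchlesingerAux.Tr3 x a j i - SchlesingerAux.Tr3 x a i j) else 0) := by
      intro a _
      simp only [smul_add, Finset.sum_add_distrib, smul_ite, smul_zero,
        Finset.sum_ite_irrel, Finset.sum_ite_eq, Finset.sum_const_zero]
      rw [if_pos (Finset.mem_erase.mpr ⟨hij, Finset.mem_univ i⟩)]
    rw [Finset.sum_congr rfl step3]
    rw [Finset.sum_add_distrib, Finset.sum_add_distrib]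
    -- first sum: drop the a = j term (it vanishes)
    have hz1 : ((t i - t j)⁻¹ * (t j - t i)⁻¹) •
        (SchlesingerAux.Tr3 x i j j - SchlesingerAux.Tr3 x i j j) = 0 := by
      rw [sub_self, smul_zero]
    rw [← Finset.sum_erase (Finset.univ.erase i)
      (f := fun a => ((t i - t a)⁻¹ * (t j - t i)⁻¹) •
        (SchlesingerAux.Tr3 x i j a - SchlesingerAux.Tr3 x i a j)) (a := j) hz1]
    -- second sum: collapse the ite over a = j
    rw [Finset.sum_ite_eq' (Finset.univ.erase i) j]
    rw [if_pos (Finset.mem_erase.mpr ⟨hji, Finset.mem_univ j⟩)]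
    have hz2 : ((t i - t j)⁻¹ * (t j - t i)⁻¹) •
        (SchlesingerAux.Tr3 x j i i - SchlesingerAux.Tr3 x j i i) = 0 := by
      rw [sub_self, smul_zero]
    rw [← Finset.sum_erase (Finset.univ.erase j)
      (f := fun b => ((t i - t j)⁻¹ * (t j - t b)⁻¹) •
        (SchlesingerAux.Tr3 x j b i - SchlesingerAux.Tr3 x j i b)) (a := i) hz2]
    rw [Finset.erase_right_comm (s := Finset.univ) (a := j) (b := i)]
    -- third sum: intersection
    rw [Finset.sum_ite_mem]
    have hinter : (Finset.univ.erase i) ∩ (Finset.univ.erase j)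
        = (Finset.univ.erase i).erase j := by
      ext a; simp [Finset.mem_erase, and_comm, and_assoc]
    rw [hinter]
    rw [← Finset.sum_add_distrib, ← Finset.sum_add_distrib]
    refine Finset.sum_eq_zero fun a ha => ?_
    have haj : a ≠ j := (Finset.mem_erase.mp ha).1
    have hai : a ≠ i := (Finset.mem_erase.mp (Finset.mem_erase.mp ha).2).1
    have hia : t i - t a ≠ 0 := sub_ne_zero.mpr fun h => hai (ht h).symm
    have hja : t j - t a ≠ 0 := sub_ne_zero.mpr fun h => haj (ht h).symm
    have hijt : t i - t j ≠ 0 := sub_ne_zero.mpr fun h => hij (ht h)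
    have hjit : t j - t i ≠ 0 := sub_ne_zero.mpr fun h => hji (ht h)
    rw [SchlesingerAux.Tr3_cyc x j i a, SchlesingerAux.Tr3_cyc x a i j,
      SchlesingerAux.Tr3_cyc x j a i, SchlesingerAux.Tr3_cyc x a j i]
    set X := SchlesingerAux.Tr3 x i j a with hX
    set Y := SchlesingerAux.Tr3 x i a j with hY
    have hcoef : (t i - t a)⁻¹ * (t j - t i)⁻¹ + (t i - t j)⁻¹ * (t j - t a)⁻¹
        - (t i - t a)⁻¹ * (t j - t a)⁻¹ = 0 := by
      field_simp
      ring
    calc ((t i - t a)⁻¹ * (t j - t i)⁻¹) • (X - Y)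
          + ((t i - t j)⁻¹ * (t j - t a)⁻¹) • (X - Y)
          + ((t i - t a)⁻¹ * (t j - t a)⁻¹) • (Y - X)
        = ((t i - t a)⁻¹ * (t j - t i)⁻¹ + (t i - t j)⁻¹ * (t j - t a)⁻¹
            - (t i - t a)⁻¹ * (t j - t a)⁻¹) • (X - Y) := by
          rw [sub_smul, add_smul]
          rw [show Y - X = -(X - Y) by ring, smul_neg]
          ring
      _ = 0 := by rw [hcoef, zero_smul]
end

section
/- Let A be the Weyl algebra on generators q_{jk}, p_{kj} (1 ≤ j ≤ n per pair i, for i = 1,...,m, with relations [q^{(i)}_{jk}, p^{(i')}_{k'j'}] = δ_{ii'}δ_{jj'}δ_{kk'} and all other generators commuting). Define matrices Q_i = (q^{(i)}_{jk}) and P_i = (p^{(i)}_{kj}) with entries in A. Then for i ≠ j, the quantum Hamiltonians Ĥ_i := Σ_{k≠i} Tr(Q_k P_k Q_i P_i)/(t_i - t_k) pairwise commute in A, where t_1,...,t_m ∈ ℂ are pairwise distinct. -/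
set_option linter.unusedSectionVars false
set_option maxHeartbeats 1000000


section Aux

variable {m n : ℕ} {A : Type*} [Ring A] [Algebra ℂ A]

/-- `Tr(M_x M_y)` as an explicit double sum. -/
def sqTT (M : Fin m → Matrix (Fin n) (Fin n) A) (x y : Fin m) : A :=
  ∑ α, ∑ β, M x α β * M y β α

/-- `Tr(M_x M_y M_z)` as an explicit triple sum. -/
def sqF3 (M : Fin m → Matrix (Fin n) (Fin n) A) (x y z : Fin m) : A :=
  ∑ α, ∑ β, ∑ γ, M x α β * M y β γ * M z γ α

lemma sqRot3 (f : Fin n → Fin n → Fin n → A) :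
    (∑ α, ∑ β, ∑ γ, f α β γ) = ∑ γ, ∑ α, ∑ β, f α β γ := by
  rw [show (∑ α, ∑ β, ∑ γ, f α β γ) = ∑ α, ∑ γ, ∑ β, f α β γ from
    Finset.sum_congr rfl fun _ _ => Finset.sum_comm, Finset.sum_comm]

lemma sqTT_trace (M : Fin m → Matrix (Fin n) (Fin n) A) (x y : Fin m) :
    (M x * M y).trace = sqTT M x y := by
  simp [Matrix.trace, sqTT, Matrix.mul_apply, Matrix.diag]

variable {M : Fin m → Matrix (Fin n) (Fin n) A}
  (hc : ∀ k l : Fin m, k ≠ l → ∀ a b c d, Commute (M k a b) (M l c d))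

include hc

lemma sqTT_symm {x y : Fin m} (h : x ≠ y) : sqTT M x y = sqTT M y x := by
  unfold sqTT
  rw [Finset.sum_comm]
  exact Finset.sum_congr rfl fun β _ => Finset.sum_congr rfl fun α _ => (hc x y h α β β α)

lemma sqTT_commute {x y z w : Fin m} (hxz : x ≠ z) (hxw : x ≠ w) (hyz : y ≠ z)
    (hyw : y ≠ w) : Commute (sqTT M x y) (sqTT M z w) := by
  unfold sqTT
  refine Commute.sum_left _ _ _ fun α _ => Commute.sum_left _ _ _ fun β _ => ?_
  refine Commute.sum_right _ _ _ fun γ _ => Commute.sum_right _ _ _ fun δ _ => ?_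
  exact ((hc x z hxz α β γ δ).mul_right (hc x w hxw α β δ γ)).mul_left
    ((hc y z hyz β α γ δ).mul_right (hc y w hyw β α δ γ))

lemma sqF3_cyc {x y z : Fin m} (hxy : x ≠ y) (hxz : x ≠ z) :
    sqF3 M x y z = sqF3 M y z x := by
  unfold sqF3
  have h1 : (∑ α, ∑ β, ∑ γ, M x α β * M y β γ * M z γ α)
      = ∑ α, ∑ β, ∑ γ, M y β γ * M z γ α * M x α β := by
    refine Finset.sum_congr rfl fun α _ => Finset.sum_congr rfl fun β _ =>
      Finset.sum_congr rfl fun γ _ => ?_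
    rw [mul_assoc, ((hc x y hxy α β β γ).mul_right (hc x z hxz α β γ α)).eq, mul_assoc]
  exact h1.trans (sqRot3 (fun a b c => M y a b * M z b c * M x c a)).symm

end Aux


section Aux2

variable {m n : ℕ} {A : Type*} [Ring A] [Algebra ℂ A]

lemma sqRev3 (f : Fin n → Fin n → Fin n → A) :
    (∑ α, ∑ β, ∑ γ, f α β γ) = ∑ γ, ∑ β, ∑ α, f α β γ := by
  rw [show (∑ α, ∑ β, ∑ γ, f α β γ) = ∑ α, ∑ γ, ∑ β, f α β γ from
    Finset.sum_congr rfl fun _ _ => Finset.sum_comm, Finset.sum_comm]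
  exact Finset.sum_congr rfl fun _ _ => Finset.sum_comm

lemma sqSwap (f : Fin n → Fin n → Fin n → Fin n → A) :
    (∑ α, ∑ β, ∑ γ, ∑ δ, f α β γ δ) = ∑ γ, ∑ δ, ∑ α, ∑ β, f α β γ δ := by
  calc (∑ α, ∑ β, ∑ γ, ∑ δ, f α β γ δ)
      = ∑ α, ∑ γ, ∑ β, ∑ δ, f α β γ δ :=
        Finset.sum_congr rfl fun _ _ => Finset.sum_comm
    _ = ∑ γ, ∑ α, ∑ β, ∑ δ, f α β γ δ := Finset.sum_comm
    _ = ∑ γ, ∑ α, ∑ δ, ∑ β, f α β γ δ :=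
        Finset.sum_congr rfl fun _ _ => Finset.sum_congr rfl fun _ _ => Finset.sum_comm
    _ = ∑ γ, ∑ δ, ∑ α, ∑ β, f α β γ δ :=
        Finset.sum_congr rfl fun _ _ => Finset.sum_comm

lemma sqMulMul {R : Type*} [Ring R] {x1 a x2 b : R} (h : Commute a x2) :
    (x1 * a) * (x2 * b) = x1 * x2 * (a * b) := by
  rw [mul_assoc, ← mul_assoc a, h.eq, mul_assoc, ← mul_assoc, ← mul_assoc]

variable {M : Fin m → Matrix (Fin n) (Fin n) A}
  (hc : ∀ k l : Fin m, k ≠ l → ∀ a b c d, Commute (M k a b) (M l c d))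
  (hs : ∀ (k : Fin m) a b c d, M k a b * M k c d - M k c d * M k a b
      = (if a = d then M k c b else 0) - (if b = c then M k a d else 0))

include hc hs

lemma sq_key {x a b : Fin m} (hxa : x ≠ a) (hxb : x ≠ b) (hab : a ≠ b) :
    sqTT M x a * sqTT M x b - sqTT M x b * sqTT M x a = sqF3 M x a b - sqF3 M x b a := by
  have e1 : sqTT M x a * sqTT M x b
      = ∑ α, ∑ β, ∑ γ, ∑ δ, (M x α β * M a β α) * (M x γ δ * M b δ γ) := by
    rw [show sqTT M x a * sqTT M x b
        = ∑ γ, ∑ δ, ∑ α, ∑ β, (M x α β * M a β α) * (M x γ δ * M b δ γ) from by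
      simp [sqTT, Finset.sum_mul, Finset.mul_sum]]
    exact (sqSwap _).symm
  have e2 : sqTT M x b * sqTT M x a
      = ∑ α, ∑ β, ∑ γ, ∑ δ, (M x γ δ * M b δ γ) * (M x α β * M a β α) := by
    simp [sqTT, Finset.sum_mul, Finset.mul_sum]
  rw [e1, e2]
  simp only [← Finset.sum_sub_distrib]
  have key : ∀ α β γ δ : Fin n,
      (M x α β * M a β α) * (M x γ δ * M b δ γ) - (M x γ δ * M b δ γ) * (M x α β * M a β α)
      = (if α = δ then M x γ β * (M a β α * M b δ γ) else 0)
        - (if β = γ then M x α δ * (M a β α * M b δ γ) else 0) := by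
    intro α β γ δ
    rw [sqMulMul (hc a x (Ne.symm hxa) β α γ δ),
        sqMulMul (hc b x (Ne.symm hxb) δ γ α β)]
    have hba : M b δ γ * M a β α = M a β α * M b δ γ := (hc b a (Ne.symm hab) δ γ β α).eq
    rw [hba, ← sub_mul, hs x α β γ δ, sub_mul, ite_mul, ite_mul]
    simp
  simp only [key]
  rw [show (∑ α, ∑ β, ∑ γ, ∑ δ,
      ((if α = δ then M x γ β * (M a β α * M b δ γ) else 0)
        - (if β = γ then M x α δ * (M a β α * M b δ γ) else 0)))
    = (∑ α, ∑ β, ∑ γ, ∑ δ, (if α = δ then M x γ β * (M a β α * M b δ γ) else 0))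
      - (∑ α, ∑ β, ∑ γ, ∑ δ, (if β = γ then M x α δ * (M a β α * M b δ γ) else 0)) from by
    simp only [Finset.sum_sub_distrib]]
  congr 1
  · -- first sum = sqF3 x a b
    have h1 : (∑ α, ∑ β, ∑ γ, ∑ δ, (if α = δ then M x γ β * (M a β α * M b δ γ) else 0))
        = ∑ α, ∑ β, ∑ γ, M x γ β * (M a β α * M b α γ) := by
      refine Finset.sum_congr rfl fun α _ => Finset.sum_congr rfl fun β _ =>
        Finset.sum_congr rfl fun γ _ => ?_
      simp
    rw [h1, sqRev3 (fun α β γ => M x γ β * (M a β α * M b α γ))]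
    unfold sqF3
    exact Finset.sum_congr rfl fun α _ => Finset.sum_congr rfl fun β _ =>
      Finset.sum_congr rfl fun γ _ => (mul_assoc _ _ _).symm
  · -- second sum = sqF3 x b a
    have h2 : (∑ α, ∑ β, ∑ γ, ∑ δ, (if β = γ then M x α δ * (M a β α * M b δ γ) else 0))
        = ∑ α, ∑ β, ∑ δ, M x α δ * (M b δ β * M a β α) := by
      refine Finset.sum_congr rfl fun α _ => Finset.sum_congr rfl fun β _ => ?_
      rw [Finset.sum_comm]
      refine Finset.sum_congr rfl fun δ _ => ?_
      simp [(hc a b hab β α δ β).eq]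
    rw [h2, show (∑ α, ∑ β, ∑ δ, M x α δ * (M b δ β * M a β α))
        = ∑ α, ∑ δ, ∑ β, M x α δ * (M b δ β * M a β α) from
      Finset.sum_congr rfl fun _ _ => Finset.sum_comm]
    unfold sqF3
    exact Finset.sum_congr rfl fun α _ => Finset.sum_congr rfl fun β _ =>
      Finset.sum_congr rfl fun γ _ => (mul_assoc _ _ _).symm

end Aux2


section Aux3

lemma weylBrk {R : Type*} [Ring R] (Q1 P1 Q2 P2 e1 e2 : R)
    (h1 : P1 * Q2 = Q2 * P1 - e1) (h2 : P2 * Q1 = Q1 * P2 - e2)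
    (hq : Q1 * Q2 = Q2 * Q1) (hp : P1 * P2 = P2 * P1)
    (he1 : ∀ z, e1 * z = z * e1) (he2 : ∀ z, e2 * z = z * e2) :
    (Q1 * P1) * (Q2 * P2) - (Q2 * P2) * (Q1 * P1)
      = Q2 * P1 * e2 - Q1 * P2 * e1 := by
  have t1 : (Q1 * P1) * (Q2 * P2) = (Q2 * Q1) * (P1 * P2) - Q1 * P2 * e1 := by
    rw [mul_assoc Q1 P1, ← mul_assoc P1, h1, sub_mul, mul_sub, he1, ← mul_assoc,
      ← mul_assoc, ← mul_assoc, hq, mul_assoc (Q2 * Q1)]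
  have t2 : (Q2 * P2) * (Q1 * P1) = (Q2 * Q1) * (P1 * P2) - Q2 * P1 * e2 := by
    rw [mul_assoc Q2 P2, ← mul_assoc P2, h2, sub_mul, mul_sub, he2, ← mul_assoc,
      ← mul_assoc, ← mul_assoc, mul_assoc (Q2 * Q1), hp]
  rw [t1, t2]
  abel

variable {m n : ℕ} {A : Type*} [Ring A] {d : Fin m → ℕ}
  {q : ∀ i : Fin m, Matrix (Fin n) (Fin (d i)) A}
  {p : ∀ i : Fin m, Matrix (Fin (d i)) (Fin n) A}

lemma weyl_comm
    (hqp_ne : ∀ (i i' : Fin m), i ≠ i' →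
      ∀ (a : Fin n) (b : Fin (d i)) (b' : Fin (d i')) (a' : Fin n),
        Commute (q i a b) (p i' b' a'))
    (hqq : ∀ (i i' : Fin m) (a : Fin n) (b : Fin (d i)) (a' : Fin n) (b' : Fin (d i')),
      Commute (q i a b) (q i' a' b'))
    (hpp : ∀ (i i' : Fin m) (b : Fin (d i)) (a : Fin n) (b' : Fin (d i')) (a' : Fin n),
      Commute (p i b a) (p i' b' a'))
    {k l : Fin m} (hkl : k ≠ l) (a b c e : Fin n) :
    Commute ((q k * p k) a b) ((q l * p l) c e) := by
  simp only [Matrix.mul_apply]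
  refine Commute.sum_left _ _ _ fun x _ => Commute.sum_right _ _ _ fun y _ => ?_
  have hQ : Commute (q k a x) (q l c y * p l y e) :=
    (hqq k l a x c y).mul_right (hqp_ne k l hkl a x y e)
  have hP : Commute (p k x b) (q l c y * p l y e) :=
    ((hqp_ne l k hkl.symm c y x b).symm).mul_right (hpp k l x b y e)
  exact hQ.mul_left hP

lemma weyl_same
    (hqp_same : ∀ (i : Fin m) (a a' : Fin n) (b b' : Fin (d i)),
      q i a b * p i b' a' - p i b' a' * q i a b = if a = a' ∧ b = b' then 1 else 0)
    (hqq : ∀ (i i' : Fin m) (a : Fin n) (b : Fin (d i)) (a' : Fin n) (b' : Fin (d i')),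
      Commute (q i a b) (q i' a' b'))
    (hpp : ∀ (i i' : Fin m) (b : Fin (d i)) (a : Fin n) (b' : Fin (d i')) (a' : Fin n),
      Commute (p i b a) (p i' b' a'))
    (k : Fin m) (a b c e : Fin n) :
    (q k * p k) a b * (q k * p k) c e - (q k * p k) c e * (q k * p k) a b
      = (if a = e then (q k * p k) c b else 0) - (if b = c then (q k * p k) a e else 0) := by
  simp only [Matrix.mul_apply]
  have e1 : (∑ x, q k a x * p k x b) * (∑ y, q k c y * p k y e)
      = ∑ x, ∑ y, (q k a x * p k x b) * (q k c y * p k y e) := by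
    rw [Finset.sum_mul_sum]
  have e2 : (∑ y, q k c y * p k y e) * (∑ x, q k a x * p k x b)
      = ∑ x, ∑ y, (q k c y * p k y e) * (q k a x * p k x b) := by
    rw [Finset.sum_mul_sum]; exact Finset.sum_comm
  rw [e1, e2, ← Finset.sum_sub_distrib]
  simp only [← Finset.sum_sub_distrib]
  have key : ∀ x y, (q k a x * p k x b) * (q k c y * p k y e)
        - (q k c y * p k y e) * (q k a x * p k x b)
      = (if a = e ∧ x = y then q k c y * p k x b else 0)
        - (if c = b ∧ y = x then q k a x * p k y e else 0) := by
    intro x y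
    have h1 : p k x b * q k c y = q k c y * p k x b - (if c = b ∧ y = x then (1:A) else 0) := by
      rw [← hqp_same k c b y x]; abel
    have h2 : p k y e * q k a x = q k a x * p k y e - (if a = e ∧ x = y then (1:A) else 0) := by
      rw [← hqp_same k a e x y]; abel
    rw [weylBrk (q k a x) (p k x b) (q k c y) (p k y e) _ _ h1 h2
      (hqq k k a x c y).eq (hpp k k x b y e).eq
      (fun z => by split <;> simp) (fun z => by split <;> simp)]
    congr 1 <;> (split <;> simp)
  simp only [key]
  rw [show (∑ x, ∑ y, ((if a = e ∧ x = y then q k c y * p k x b else 0)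
        - (if c = b ∧ y = x then q k a x * p k y e else 0)))
      = (∑ x, ∑ y, (if a = e ∧ x = y then q k c y * p k x b else 0))
        - (∑ x, ∑ y, (if c = b ∧ y = x then q k a x * p k y e else 0)) from by
    simp only [Finset.sum_sub_distrib]]
  congr 1
  · simp only [ite_and]
    rw [show (∑ x, ∑ y, (if a = e then if x = y then q k c y * p k x b else 0 else 0))
        = ∑ x, (if a = e then q k c x * p k x b else 0) from
      Finset.sum_congr rfl fun x _ => by split <;> simp]
    split <;> simp
  · simp only [ite_and]
    rw [show (∑ x, ∑ y, (if c = b then if y = x then q k a x * p k y e else 0 else 0))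
        = ∑ x, (if c = b then q k a x * p k x e else 0) from
      Finset.sum_congr rfl fun x _ => by split <;> simp [Finset.sum_ite_eq]]
    by_cases hcb : c = b
    · simp [hcb]
    · simp [hcb, Ne.symm hcb]

end Aux3


/-- The quantum Hamiltonians of the simply-laced quantum connection of a star commute.

`A` is the Weyl algebra (modelled as any associative `ℂ`-algebra containing the
generators with the canonical commutation relations): generators `q i a b`
(entries of the `n × d_i` matrix `Q_i`) and `p i b a` (entries of the `d_i × n`
matrix `P_i`) with `[q^{(i)}_{ab}, p^{(i')}_{b'a'}] = δ_{ii'}δ_{aa'}δ_{bb'}` and all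
other pairs of generators commuting. For pairwise distinct `t_1,…,t_m ∈ ℂ` the
quantum Hamiltonians `Ĥ_i := Σ_{k≠i} Tr(Q_kP_kQ_iP_i)/(t_i - t_k)` commute in `A`
for `i ≠ j`. -/
theorem star_quantum_hamiltonians_commute (m n : ℕ) (d : Fin m → ℕ)
    (A : Type*) [Ring A] [Algebra ℂ A]
    (q : ∀ i : Fin m, Matrix (Fin n) (Fin (d i)) A)
    (p : ∀ i : Fin m, Matrix (Fin (d i)) (Fin n) A)
    (hqp_same : ∀ (i : Fin m) (a a' : Fin n) (b b' : Fin (d i)),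
      q i a b * p i b' a' - p i b' a' * q i a b = if a = a' ∧ b = b' then 1 else 0)
    (hqp_ne : ∀ (i i' : Fin m), i ≠ i' →
      ∀ (a : Fin n) (b : Fin (d i)) (b' : Fin (d i')) (a' : Fin n),
        Commute (q i a b) (p i' b' a'))
    (hqq : ∀ (i i' : Fin m) (a : Fin n) (b : Fin (d i)) (a' : Fin n) (b' : Fin (d i')),
      Commute (q i a b) (q i' a' b'))
    (hpp : ∀ (i i' : Fin m) (b : Fin (d i)) (a : Fin n) (b' : Fin (d i')) (a' : Fin n),
      Commute (p i b a) (p i' b' a'))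
    (t : Fin m → ℂ) (ht : Function.Injective t)
    (i j : Fin m) (hij : i ≠ j) :
    (∑ k ∈ Finset.univ.erase i, (t i - t k)⁻¹ • ((q k * p k) * (q i * p i)).trace) *
      (∑ k ∈ Finset.univ.erase j, (t j - t k)⁻¹ • ((q k * p k) * (q j * p j)).trace)
    = (∑ k ∈ Finset.univ.erase j, (t j - t k)⁻¹ • ((q k * p k) * (q j * p j)).trace) *
      (∑ k ∈ Finset.univ.erase i, (t i - t k)⁻¹ • ((q k * p k) * (q i * p i)).trace) := by
  classical
  set M : Fin m → Matrix (Fin n) (Fin n) A := fun k => q k * p k with hM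
  have hc : ∀ k l : Fin m, k ≠ l → ∀ a b c e, Commute (M k a b) (M l c e) :=
    fun k l hkl a b c e => weyl_comm hqp_ne hqq hpp hkl a b c e
  have hs : ∀ (k : Fin m) (a b c e : Fin n), M k a b * M k c e - M k c e * M k a b
      = (if a = e then M k c b else 0) - (if b = c then M k a e else 0) :=
    fun k a b c e => weyl_same hqp_same hqq hpp k a b c e
  set c : Fin m → Fin m → ℂ := fun x y => (t x - t y)⁻¹ with hcdef
  -- rewrite Hamiltonians
  have hHi : (∑ k ∈ Finset.univ.erase i, (t i - t k)⁻¹ • ((q k * p k) * (q i * p i)).trace)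
      = ∑ k ∈ Finset.univ.erase i, c i k • sqTT M i k := by
    refine Finset.sum_congr rfl fun k hk => ?_
    have hki : k ≠ i := (Finset.mem_erase.mp hk).1
    rw [show ((q k * p k) * (q i * p i)).trace = sqTT M k i from sqTT_trace M k i,
      sqTT_symm hc hki]
  have hHj : (∑ k ∈ Finset.univ.erase j, (t j - t k)⁻¹ • ((q k * p k) * (q j * p j)).trace)
      = ∑ k ∈ Finset.univ.erase j, c j k • sqTT M j k := by
    refine Finset.sum_congr rfl fun k hk => ?_
    have hkj : k ≠ j := (Finset.mem_erase.mp hk).1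
    rw [show ((q k * p k) * (q j * p j)).trace = sqTT M k j from sqTT_trace M k j,
      sqTT_symm hc hkj]
  rw [hHi, hHj, ← sub_eq_zero]
  have exp1 : (∑ k ∈ Finset.univ.erase i, c i k • sqTT M i k) *
      (∑ l ∈ Finset.univ.erase j, c j l • sqTT M j l)
      = ∑ k ∈ Finset.univ.erase i, ∑ l ∈ Finset.univ.erase j,
          (c i k * c j l) • (sqTT M i k * sqTT M j l) := by
    rw [Finset.sum_mul_sum]
    exact Finset.sum_congr rfl fun k _ => Finset.sum_congr rfl fun l _ =>
      smul_mul_smul_comm _ _ _ _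
  have exp2 : (∑ l ∈ Finset.univ.erase j, c j l • sqTT M j l) *
      (∑ k ∈ Finset.univ.erase i, c i k • sqTT M i k)
      = ∑ k ∈ Finset.univ.erase i, ∑ l ∈ Finset.univ.erase j,
          (c i k * c j l) • (sqTT M j l * sqTT M i k) := by
    rw [Finset.sum_mul_sum, Finset.sum_comm]
    exact Finset.sum_congr rfl fun k _ => Finset.sum_congr rfl fun l _ => by
      rw [smul_mul_smul_comm, mul_comm (c j l)]
  rw [exp1, exp2, ← Finset.sum_sub_distrib]
  simp only [← Finset.sum_sub_distrib, ← smul_sub]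
  -- combinatorial part
  have hjmem : j ∈ Finset.univ.erase i := Finset.mem_erase.mpr ⟨hij.symm, Finset.mem_univ j⟩
  have himem : i ∈ Finset.univ.erase j := Finset.mem_erase.mpr ⟨hij, Finset.mem_univ i⟩
  set s : Finset (Fin m) := (Finset.univ.erase i).erase j with hsdef
  have hs1 : Finset.univ.erase i = insert j s := (Finset.insert_erase hjmem).symm
  have hs2 : Finset.univ.erase j = insert i s := by
    rw [hsdef, Finset.erase_right_comm]
    exact (Finset.insert_erase himem).symm
  have hjs : j ∉ s := Finset.notMem_erase j _
  have his : i ∉ s := fun h =>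
    (Finset.mem_erase.mp (Finset.mem_of_mem_erase h)).1 rfl
  have hmem : ∀ k ∈ s, k ≠ j ∧ k ≠ i := fun k hk =>
    ⟨(Finset.mem_erase.mp hk).1, (Finset.mem_erase.mp (Finset.mem_of_mem_erase hk)).1⟩
  let B : Fin m → Fin m → A :=
    fun k l => sqTT M i k * sqTT M j l - sqTT M j l * sqTT M i k
  show (∑ k ∈ Finset.univ.erase i, ∑ l ∈ Finset.univ.erase j, (c i k * c j l) • B k l) = 0
  -- values of the brackets
  have hBji : B j i = 0 := by
    show sqTT M i j * sqTT M j i - sqTT M j i * sqTT M i j = 0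
    rw [sqTT_symm hc hij.symm, sub_self]
  have hBjk : ∀ k ∈ s, B j k = sqF3 M i k j - sqF3 M i j k := by
    intro k hk
    obtain ⟨hkj, hki⟩ := hmem k hk
    show sqTT M i j * sqTT M j k - sqTT M j k * sqTT M i j = _
    rw [sqTT_symm hc hij, sq_key hc hs hij.symm hkj.symm (Ne.symm hki : i ≠ k),
      sqF3_cyc hc hij.symm hkj.symm, sqF3_cyc hc hkj.symm hij.symm,
      sqF3_cyc hc hki hkj]
  have hBki : ∀ k ∈ s, B k i = sqF3 M i k j - sqF3 M i j k := by
    intro k hk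
    obtain ⟨hkj, hki⟩ := hmem k hk
    show sqTT M i k * sqTT M j i - sqTT M j i * sqTT M i k = _
    rw [sqTT_symm hc hij.symm, sq_key hc hs (Ne.symm hki) hij hkj]
  have hBkk : ∀ k ∈ s, B k k = -(sqF3 M i k j - sqF3 M i j k) := by
    intro k hk
    obtain ⟨hkj, hki⟩ := hmem k hk
    show sqTT M i k * sqTT M j k - sqTT M j k * sqTT M i k = _
    rw [sqTT_symm hc (Ne.symm hki), sqTT_symm hc (Ne.symm hkj),
      sq_key hc hs hki hkj hij, sqF3_cyc hc hki hkj,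
      sqF3_cyc hc hkj hki, sqF3_cyc hc hij.symm hkj.symm]
    abel
  have hBkl : ∀ k ∈ s, ∀ l ∈ s, k ≠ l → B k l = 0 := by
    intro k hk l hl hkl
    obtain ⟨hkj, hki⟩ := hmem k hk
    obtain ⟨hlj, hli⟩ := hmem l hl
    show sqTT M i k * sqTT M j l - sqTT M j l * sqTT M i k = 0
    exact sub_eq_zero.mpr (sqTT_commute hc hij (Ne.symm hli) hkj hkl).eq
  rw [hs1, Finset.sum_insert hjs]
  simp only [hs2, Finset.sum_insert his]
  rw [hBji, smul_zero, zero_add]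
  rw [show (∑ k ∈ s, ((c i k * c j i) • B k i + ∑ l ∈ s, (c i k * c j l) • B k l))
      = ∑ k ∈ s, ((c i k * c j i) • B k i + (c i k * c j k) • B k k) from
    Finset.sum_congr rfl fun k hk => by
      rw [Finset.sum_eq_single_of_mem k hk
        (fun l hl hlk => by rw [hBkl k hk l hl (Ne.symm hlk), smul_zero])]]
  rw [← Finset.sum_add_distrib]
  refine Finset.sum_eq_zero fun k hk => ?_
  obtain ⟨hkj, hki⟩ := hmem k hk
  rw [hBjk k hk, hBki k hk, hBkk k hk, smul_neg, ← sub_eq_add_neg, ← sub_smul, ← add_smul]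
  have h1 : t i - t j ≠ 0 := sub_ne_zero.mpr fun h => hij (ht h)
  have h2 : t j - t k ≠ 0 := sub_ne_zero.mpr fun h => hkj (ht h.symm)
  have h3 : t i - t k ≠ 0 := sub_ne_zero.mpr fun h => hki (ht h.symm)
  have h4 : t j - t i ≠ 0 := sub_ne_zero.mpr fun h => hij (ht h.symm)
  have hz : c i j * c j k + (c i k * c j i - c i k * c j k) = 0 := by
    rw [hcdef]; dsimp only
    field_simp
    ring
  rw [hz, zero_smul]
end

section
/- Let Q, Q' be n × d matrices of pairwise commuting position generators and P, P' the corresponding d × n momentum matrices in a Weyl algebra, with the only nontrivial relations being [Q_{ab}, P_{cd}] = δ_{ad}δ_{bc} and [Q'_{ab}, P'_{cd}] = δ_{ad}δ_{bc}. Then [Tr(PQ), Tr(Q P Q' P')] = 0 and more generally the trace of any quantum 2-cycle commutes with the trace of any degenerate quantum 4-cycle. -/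
section Aux

variable {A : Type*} [Ring A]

/-- If `T` lowers `x` and raises `y`, then `T` commutes with `x * y`. -/
lemma pair_comm_aux (T x y : A) (hx : T * x = x * T - x) (hy : T * y = y * T + y) :
    Commute T (x * y) := by
  show T * (x * y) = (x * y) * T
  calc T * (x * y) = (T * x) * y := (mul_assoc _ _ _).symm
    _ = (x * T - x) * y := by rw [hx]
    _ = x * (T * y) - x * y := by noncomm_ring
    _ = x * (y * T + y) - x * y := by rw [hy]
    _ = (x * y) * T := by noncomm_ring

end Aux

section Main

variable {n d : ℕ} {A : Type*} [Ring A]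

/-- The lowering property of `∑ P c e * Q e c` on the `Q` generators. -/
lemma trPQ_lower (Q : Matrix (Fin n) (Fin d) A) (P : Matrix (Fin d) (Fin n) A)
    (hQP : ∀ (a : Fin n) (b : Fin d) (c : Fin d) (e : Fin n),
      Q a b * P c e - P c e * Q a b = if a = e ∧ b = c then 1 else 0)
    (hQQ : ∀ a b a' b', Commute (Q a b) (Q a' b')) (a : Fin n) (b : Fin d) :
    (∑ c, ∑ e, P c e * Q e c) * Q a b = Q a b * (∑ c, ∑ e, P c e * Q e c) - Q a b := by
  have step : ∀ (c : Fin d) (e : Fin n),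
      P c e * Q e c * Q a b
        = Q a b * (P c e * Q e c) - (if a = e ∧ b = c then Q e c else 0) := by
    intro c e
    have h1 : P c e * Q a b = Q a b * P c e - (if a = e ∧ b = c then (1:A) else 0) := by
      rw [← hQP a b c e]; noncomm_ring
    have h2 : Q e c * Q a b = Q a b * Q e c := (hQQ e c a b).eq
    calc P c e * Q e c * Q a b = P c e * (Q a b * Q e c) := by rw [mul_assoc, h2]
      _ = (P c e * Q a b) * Q e c := by rw [mul_assoc]
      _ = (Q a b * P c e - if a = e ∧ b = c then (1:A) else 0) * Q e c := by rw [h1]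
      _ = Q a b * (P c e * Q e c) - (if a = e ∧ b = c then Q e c else 0) := by
          rw [sub_mul, mul_assoc]; congr 1; split <;> simp
  calc (∑ c, ∑ e, P c e * Q e c) * Q a b
      = ∑ c, ∑ e, P c e * Q e c * Q a b := by simp [Finset.sum_mul]
    _ = ∑ c, ∑ e, (Q a b * (P c e * Q e c) - (if a = e ∧ b = c then Q e c else 0)) :=
        Finset.sum_congr rfl fun c _ => Finset.sum_congr rfl fun e _ => step c e
    _ = Q a b * (∑ c, ∑ e, P c e * Q e c) - Q a b := by
        simp [Finset.sum_sub_distrib, Finset.mul_sum, ite_and, Finset.sum_ite_eq]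

/-- The raising property of `∑ P c e * Q e c` on the `P` generators. -/
lemma trPQ_raise (Q : Matrix (Fin n) (Fin d) A) (P : Matrix (Fin d) (Fin n) A)
    (hQP : ∀ (a : Fin n) (b : Fin d) (c : Fin d) (e : Fin n),
      Q a b * P c e - P c e * Q a b = if a = e ∧ b = c then 1 else 0)
    (hPP : ∀ c e c' e', Commute (P c e) (P c' e')) (c : Fin d) (e : Fin n) :
    (∑ c', ∑ e', P c' e' * Q e' c') * P c e
      = P c e * (∑ c', ∑ e', P c' e' * Q e' c') + P c e := by
  have step : ∀ (c' : Fin d) (e' : Fin n),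
      P c' e' * Q e' c' * P c e
        = P c e * (P c' e' * Q e' c') + (if e' = e ∧ c' = c then P c' e' else 0) := by
    intro c' e'
    have h1 : Q e' c' * P c e = P c e * Q e' c' + (if e' = e ∧ c' = c then (1:A) else 0) := by
      rw [← hQP e' c' c e]; noncomm_ring
    have h2 : P c' e' * P c e = P c e * P c' e' := (hPP c' e' c e).eq
    calc P c' e' * Q e' c' * P c e
        = P c' e' * (P c e * Q e' c' + (if e' = e ∧ c' = c then (1:A) else 0)) := by
          rw [mul_assoc, h1]
      _ = (P c' e' * P c e) * Q e' c'
            + P c' e' * (if e' = e ∧ c' = c then (1:A) else 0) := by noncomm_ring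
      _ = P c e * (P c' e' * Q e' c') + (if e' = e ∧ c' = c then P c' e' else 0) := by
          rw [h2, mul_assoc]; congr 1; split <;> simp
  calc (∑ c', ∑ e', P c' e' * Q e' c') * P c e
      = ∑ c', ∑ e', P c' e' * Q e' c' * P c e := by simp [Finset.sum_mul]
    _ = ∑ c', ∑ e', (P c e * (P c' e' * Q e' c')
          + (if e' = e ∧ c' = c then P c' e' else 0)) :=
        Finset.sum_congr rfl fun c' _ => Finset.sum_congr rfl fun e' _ => step c' e'
    _ = P c e * (∑ c', ∑ e', P c' e' * Q e' c') + P c e := by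
        simp [Finset.sum_add_distrib, Finset.mul_sum, ite_and, Finset.sum_ite_eq']

end Main

/-- Traces of quantum 2-cycles commute with traces of degenerate quantum 4-cycles:
for two canonical pairs `(Q, P)` (with `Q` of size `n × d`, `P` of size `d × n`) and
`(Q', P')` (with `Q'` of size `n × d'`, `P'` of size `d' × n`) of Weyl algebra
generator matrices whose only nontrivial relations are `[Q_{ab}, P_{cd}] = δ_{ad}δ_{bc}`
and `[Q'_{ab}, P'_{cd}] = δ_{ad}δ_{bc}`, the trace of any of the quantum 2-cycles
`PQ, QP, P'Q', Q'P'` commutes with the trace of the degenerate quantum 4-cycle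
`QPQ'P'`. -/
theorem two_cycle_commutes_with_degenerate_four_cycle (n d d' : ℕ) (A : Type*) [Ring A]
    (Q : Matrix (Fin n) (Fin d) A) (P : Matrix (Fin d) (Fin n) A)
    (Q' : Matrix (Fin n) (Fin d') A) (P' : Matrix (Fin d') (Fin n) A)
    (hQP : ∀ (a : Fin n) (b : Fin d) (c : Fin d) (e : Fin n),
      Q a b * P c e - P c e * Q a b = if a = e ∧ b = c then 1 else 0)
    (hQ'P' : ∀ (a : Fin n) (b : Fin d') (c : Fin d') (e : Fin n),
      Q' a b * P' c e - P' c e * Q' a b = if a = e ∧ b = c then 1 else 0)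
    (hQQ : ∀ a b a' b', Commute (Q a b) (Q a' b'))
    (hPP : ∀ c e c' e', Commute (P c e) (P c' e'))
    (hQ'Q' : ∀ a b a' b', Commute (Q' a b) (Q' a' b'))
    (hP'P' : ∀ c e c' e', Commute (P' c e) (P' c' e'))
    (hQQ' : ∀ a b a' b', Commute (Q a b) (Q' a' b'))
    (hQP' : ∀ a b c e, Commute (Q a b) (P' c e))
    (hPQ' : ∀ c e a b, Commute (P c e) (Q' a b))
    (hPP' : ∀ c e c' e', Commute (P c e) (P' c' e')) :
    Commute ((P * Q).trace) ((Q * P * (Q' * P')).trace)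
    ∧ Commute ((Q * P).trace) ((Q * P * (Q' * P')).trace)
    ∧ Commute ((P' * Q').trace) ((Q * P * (Q' * P')).trace)
    ∧ Commute ((Q' * P').trace) ((Q * P * (Q' * P')).trace) := by
  -- A reduction: to commute with the trace of the 4-cycle it suffices to commute
  -- with every entry of `Q*P` and every entry of `Q'*P'`.
  have main : ∀ T : A, (∀ a x, Commute T ((Q * P) a x)) →
      (∀ x a, Commute T ((Q' * P') x a)) →
      Commute T ((Q * P * (Q' * P')).trace) := by
    intro T h1 h2
    have : Commute T (∑ a, (Q * P * (Q' * P')) a a) := by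
      refine Commute.sum_right _ _ _ fun a _ => ?_
      rw [Matrix.mul_apply]
      exact Commute.sum_right _ _ _ fun x _ => (h1 a x).mul_right (h2 x a)
    simpa [Matrix.trace, Matrix.diag] using this
  -- the unprimed 2-cycle trace
  set S : A := ∑ c, ∑ e, P c e * Q e c with hS
  have hStr : (P * Q).trace = S := by
    simp [Matrix.trace, Matrix.diag, Matrix.mul_apply, hS]
  have hSQ := trPQ_lower Q P hQP hQQ
  have hSP := trPQ_raise Q P hQP hPP
  have hScomm : Commute S ((Q * P * (Q' * P')).trace) := by
    refine main S (fun a x => ?_) (fun x a => ?_)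
    · rw [Matrix.mul_apply]
      exact Commute.sum_right _ _ _ fun b _ =>
        pair_comm_aux S (Q a b) (P b x) (hSQ a b) (hSP b x)
    · rw [Matrix.mul_apply]
      refine Commute.sum_right _ _ _ fun f _ => ?_
      have : ∀ c e, Commute (P c e * Q e c) (Q' x f * P' f a) := fun c e =>
        ((hPQ' c e x f).mul_left (hQQ' e c x f)).mul_right
          ((hPP' c e f a).mul_left (hQP' e c f a))
      exact Commute.sum_left _ _ _ fun c _ => Commute.sum_left _ _ _ fun e _ => this c e
  -- the primed 2-cycle trace
  set S' : A := ∑ c, ∑ e, P' c e * Q' e c with hS'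
  have hS'tr : (P' * Q').trace = S' := by
    simp [Matrix.trace, Matrix.diag, Matrix.mul_apply, hS']
  have hS'Q := trPQ_lower Q' P' hQ'P' hQ'Q'
  have hS'P := trPQ_raise Q' P' hQ'P' hP'P'
  have hS'comm : Commute S' ((Q * P * (Q' * P')).trace) := by
    refine main S' (fun a x => ?_) (fun x a => ?_)
    · rw [Matrix.mul_apply]
      refine Commute.sum_right _ _ _ fun b _ => ?_
      have : ∀ c e, Commute (P' c e * Q' e c) (Q a b * P b x) := fun c e =>
        ((hQP' a b c e).symm.mul_left (hQQ' a b e c).symm).mul_right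
          ((hPP' b x c e).symm.mul_left (hPQ' b x e c).symm)
      exact Commute.sum_left _ _ _ fun c _ => Commute.sum_left _ _ _ fun e _ => this c e
    · rw [Matrix.mul_apply]
      exact Commute.sum_right _ _ _ fun f _ =>
        pair_comm_aux S' (Q' x f) (P' f a) (hS'Q x f) (hS'P f a)
  -- relate `Tr(QP)` to `Tr(PQ)` by a central constant
  have hQPtr : (Q * P).trace = S + ∑ a : Fin n, ∑ b : Fin d, (1 : A) := by
    have step : ∀ (a : Fin n) (b : Fin d), Q a b * P b a = P b a * Q a b + 1 := by
      intro a b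
      have h := hQP a b b a
      simp only [and_self, if_true] at h
      rw [← sub_eq_iff_eq_add']; exact h
    calc (Q * P).trace = ∑ a, ∑ b, Q a b * P b a := by
          simp [Matrix.trace, Matrix.diag, Matrix.mul_apply]
      _ = ∑ a, ∑ b, (P b a * Q a b + 1) :=
          Finset.sum_congr rfl fun a _ => Finset.sum_congr rfl fun b _ => step a b
      _ = (∑ a : Fin n, ∑ b : Fin d, P b a * Q a b) + ∑ a : Fin n, ∑ b : Fin d, (1:A) := by
          simp [Finset.sum_add_distrib]
      _ = S + ∑ a : Fin n, ∑ b : Fin d, (1 : A) := by rw [hS, Finset.sum_comm]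
  have hQ'P'tr : (Q' * P').trace = S' + ∑ a : Fin n, ∑ b : Fin d', (1 : A) := by
    have step : ∀ (a : Fin n) (b : Fin d'), Q' a b * P' b a = P' b a * Q' a b + 1 := by
      intro a b
      have h := hQ'P' a b b a
      simp only [and_self, if_true] at h
      rw [← sub_eq_iff_eq_add']; exact h
    calc (Q' * P').trace = ∑ a, ∑ b, Q' a b * P' b a := by
          simp [Matrix.trace, Matrix.diag, Matrix.mul_apply]
      _ = ∑ a, ∑ b, (P' b a * Q' a b + 1) :=
          Finset.sum_congr rfl fun a _ => Finset.sum_congr rfl fun b _ => step a b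
      _ = (∑ a : Fin n, ∑ b : Fin d', P' b a * Q' a b) + ∑ a : Fin n, ∑ b : Fin d', (1:A) := by
          simp [Finset.sum_add_distrib]
      _ = S' + ∑ a : Fin n, ∑ b : Fin d', (1 : A) := by rw [hS', Finset.sum_comm]
  have hconst : ∀ (m k : ℕ), Commute (∑ _a : Fin m, ∑ _b : Fin k, (1 : A))
      ((Q * P * (Q' * P')).trace) := fun m k =>
    Commute.sum_left _ _ _ fun a _ => Commute.sum_left _ _ _ fun b _ => Commute.one_left _
  refine ⟨by rw [hStr]; exact hScomm, ?_, by rw [hS'tr]; exact hS'comm, ?_⟩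
  · rw [hQPtr]; exact hScomm.add_left (hconst n d)
  · rw [hQ'P'tr]; exact hS'comm.add_left (hconst n d')
end
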